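/- arXiv:1808.02442 — 3 statements merged into one kernel-verified Lean document; each statement's English description precedes it below -/
import Mathlib

section
/- If R, S ⊆ ω, 0 < r < 1, ε > 0 and m < n are natural numbers such that |R ∩ m|/m ∈ (r − ε, r + ε) and for all ℓ with m ≤ ℓ ≤ n we have |S ∩ ℓ|/ℓ ∈ (r − ε, r + ε), then for all ℓ with m ≤ ℓ ≤ n we have |(R ∩ m) ∪ (S ∩ [m, ℓ))|/ℓ ∈ (r − 3ε, r + 3ε). -/
/-
Write `a = |R ∩ m|`, `b = |S ∩ m|` and `c = |S ∩ [m, ℓ)|`, so that `|S ∩ ℓ| = b + c` while the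
spliced set has `a + c` elements. Hence its density at `ℓ` differs from that of `S` by
`(a - b) / ℓ = (m / ℓ) (a / m - b / m)`, which is less than `2ε` in absolute value because
both `a / m` and `b / m` lie within `ε` of `r` and `m ≤ ℓ`.
-/

open Set

lemma mem_Ioo_sub_add_iff_abs_sub_lt {x r ε : ℝ} : x ∈ Ioo (r - ε) (r + ε) ↔ |x - r| < ε := by
  rw [← Real.ball_eq_Ioo, Metric.mem_ball, Real.dist_eq]

lemma ncard_union_of_lt_of_le {A B : Set ℕ} {m ℓ : ℕ} (hA : ∀ x ∈ A, x < m)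
    (hB : ∀ x ∈ B, m ≤ x ∧ x < ℓ) : (A ∪ B).ncard = A.ncard + B.ncard := by
  refine ncard_union_eq (disjoint_left.2 fun x hxA hxB => ?_)
    ((finite_Iio m).subset hA) ((finite_Iio ℓ).subset fun x hx => (hB x hx).2)
  exact (hB x hxB).1.not_gt (hA x hxA)

lemma ncard_sep_lt_eq_add {S : Set ℕ} {m ℓ : ℕ} (hmℓ : m ≤ ℓ) :
    {x | x ∈ S ∧ x < ℓ}.ncard =
      {x | x ∈ S ∧ x < m}.ncard + {x | x ∈ S ∧ m ≤ x ∧ x < ℓ}.ncard := by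
  rw [← ncard_union_of_lt_of_le (fun _ hx => hx.2) fun _ hx => hx.2]
  congr 1
  ext x
  simp only [mem_ofPred_eq, mem_union]
  grind

lemma ncard_splice_eq_add (R S : Set ℕ) (m ℓ : ℕ) :
    {x | (x ∈ R ∧ x < m) ∨ (x ∈ S ∧ m ≤ x ∧ x < ℓ)}.ncard =
      {x | x ∈ R ∧ x < m}.ncard + {x | x ∈ S ∧ m ≤ x ∧ x < ℓ}.ncard :=
  ncard_union_of_lt_of_le (fun _ hx => hx.2) fun _ hx => hx.2

lemma abs_add_div_sub_lt {a b c m ℓ r ε : ℝ} (hm : 0 < m) (hmℓ : m ≤ ℓ)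
    (ha : |a / m - r| < ε) (hb : |b / m - r| < ε) (hbc : |(b + c) / ℓ - r| < ε) :
    |(a + c) / ℓ - r| < 3 * ε := by
  have hℓ : 0 < ℓ := hm.trans_le hmℓ
  have hab : |a / m - b / m| < 2 * ε := by
    calc |a / m - b / m| = |(a / m - r) - (b / m - r)| := by ring_nf
      _ ≤ |a / m - r| + |b / m - r| := abs_sub _ _
      _ < 2 * ε := by linarith
  have hmℓ' : |m / ℓ| ≤ 1 := by
    rw [abs_of_pos (div_pos hm hℓ)]
    exact div_le_one_of_le₀ hmℓ hℓ.le
  calc |(a + c) / ℓ - r| = |((b + c) / ℓ - r) + m / ℓ * (a / m - b / m)| := by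
        field_simp
        ring_nf
    _ ≤ |(b + c) / ℓ - r| + |m / ℓ| * |a / m - b / m| := by
        rw [← abs_mul]
        exact abs_add_le _ _
    _ ≤ |(b + c) / ℓ - r| + |a / m - b / m| := by
        gcongr
        exact mul_le_of_le_one_left (abs_nonneg _) hmℓ'
    _ < 3 * ε := by linarith

theorem stmt1_general (R S : Set ℕ) (r ε : ℝ)
    (m n : ℕ) (hm : 0 < m) (hmn : m < n)
    (hR : (Nat.card {x | x ∈ R ∧ x < m} : ℝ) / m ∈ Set.Ioo (r - ε) (r + ε))
    (hS : ∀ ℓ, m ≤ ℓ → ℓ ≤ n →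
      (Nat.card {x | x ∈ S ∧ x < ℓ} : ℝ) / ℓ ∈ Set.Ioo (r - ε) (r + ε)) :
    ∀ ℓ, m ≤ ℓ → ℓ ≤ n →
      (Nat.card {x | (x ∈ R ∧ x < m) ∨ (x ∈ S ∧ m ≤ x ∧ x < ℓ)} : ℝ) / ℓ ∈
        Set.Ioo (r - 3*ε) (r + 3*ε) := by
  intro ℓ hmℓ hℓn
  have hSm := hS m le_rfl hmn.le
  have hSℓ := hS ℓ hmℓ hℓn
  simp only [Nat.card_coe_set_eq, mem_Ioo_sub_add_iff_abs_sub_lt] at hR hSm hSℓ ⊢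
  rw [ncard_sep_lt_eq_add hmℓ, Nat.cast_add] at hSℓ
  rw [ncard_splice_eq_add, Nat.cast_add]
  exact abs_add_div_sub_lt (by exact_mod_cast hm) (by exact_mod_cast hmℓ) hR hSm hSℓ

theorem stmt1 (R S : Set ℕ) (r ε : ℝ) (hr0 : 0 < r) (hr1 : r < 1) (hε : 0 < ε)
    (m n : ℕ) (hm : 0 < m) (hmn : m < n)
    (hR : (Nat.card {x | x ∈ R ∧ x < m} : ℝ) / m ∈ Set.Ioo (r - ε) (r + ε))
    (hS : ∀ ℓ, m ≤ ℓ → ℓ ≤ n →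
      (Nat.card {x | x ∈ S ∧ x < ℓ} : ℝ) / ℓ ∈ Set.Ioo (r - ε) (r + ε)) :
    ∀ ℓ, m ≤ ℓ → ℓ ≤ n →
      (Nat.card {x | (x ∈ R ∧ x < m) ∨ (x ∈ S ∧ m ≤ x ∧ x < ℓ)} : ℝ) / ℓ ∈
        Set.Ioo (r - 3*ε) (r + 3*ε) :=
  stmt1_general R S r ε m n hm hmn hR hS
end

section
/- For every chopped real (x, Π), the set Match(x, Π) of reals matching it is comeagre in 2^ω. -/
/-!
The matching set is the limsup of the open sets `Uₙ` of reals agreeing with `x` on the `n`-th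
interval, hence a Gδ. It is dense: a basic open set constrains only finitely many coordinates,
and the intervals eventually lie beyond all of them, so some `Uₙ` with `n` large meets it.
-/

open Filter Set

theorem residual_setOf_frequently_mem {X : Type*} [TopologicalSpace X] {U : ℕ → Set X}
    (hU : ∀ n, IsOpen (U n)) (hdense : ∀ N, Dense (⋃ n ≥ N, U n)) :
    {y | ∃ᶠ n in atTop, y ∈ U n} ∈ residual X := by
  have hlimsup : {y | ∃ᶠ n in atTop, y ∈ U n} = ⋂ N, ⋃ n ≥ N, U n := by
    ext y
    simp only [mem_ofPred_eq, frequently_atTop, mem_iInter, mem_iUnion, exists_prop]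
  rw [hlimsup, countable_iInter_mem]
  exact fun N => residual_of_dense_open (isOpen_biUnion fun n _ => hU n) (hdense N)

section Pi

variable {ι α : Type*} [TopologicalSpace α]

theorem IsOpen.exists_finite_forall_disjoint_inter_pi_singleton_nonempty
    {U : Set (ι → α)} (hU : IsOpen U) (hne : U.Nonempty) (x : ι → α) :
    ∃ F : Set ι, F.Finite ∧ ∀ s, Disjoint s F → (U ∩ s.pi fun i => {x i}).Nonempty := by
  classical
  obtain ⟨y, hy⟩ := hne
  obtain ⟨I, u, hu, hIU⟩ := isOpen_pi_iff.1 hU y hy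
  refine ⟨I, I.finite_toSet, fun s hs => ⟨s.piecewise x y, hIU fun i hi => ?_, fun i hi => ?_⟩⟩
  · rw [piecewise_eq_of_notMem _ _ _ (hs.notMem_of_mem_right hi)]
    exact (hu i hi).2
  · exact piecewise_eq_of_mem _ _ _ hi

theorem dense_biUnion_pi_singleton (x : ι → α) {s : ℕ → Set ι}
    (hs : ∀ F : Set ι, F.Finite → ∃ᶠ n in atTop, Disjoint (s n) F) (N : ℕ) :
    Dense (⋃ n ≥ N, (s n).pi fun i => {x i}) := by
  refine dense_iff_inter_open.2 fun U hU hne => ?_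
  obtain ⟨F, hF, hmeet⟩ := hU.exists_finite_forall_disjoint_inter_pi_singleton_nonempty hne x
  obtain ⟨n, hNn, hdisj⟩ := frequently_atTop.1 (hs F hF) N
  exact (hmeet (s n) hdisj).mono (inter_subset_inter_right U (subset_biUnion_of_mem hNn))

end Pi

theorem StrictMono.eventually_disjoint_Ico {e : ℕ → ℕ} (he : StrictMono e) {F : Set ℕ}
    (hF : F.Finite) : ∀ᶠ n in atTop, Disjoint (Ico (e n) (e (n + 1))) F := by
  obtain ⟨k, hk⟩ := hF.bddAbove
  filter_upwards [he.tendsto_atTop.eventually_gt_atTop k] with n hn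
  exact disjoint_left.2 fun i hi hiF => (hk hiF).not_gt (hn.trans_le hi.1)

theorem stmt12_general (x : ℕ → Bool) (e : ℕ → ℕ) (he : StrictMono e) :
    {y : ℕ → Bool | ∃ᶠ n in atTop, ∀ i ∈ Set.Ico (e n) (e (n+1)), y i = x i} ∈
      residual (ℕ → Bool) :=
  residual_setOf_frequently_mem
    (fun _ => isOpen_set_pi (finite_Ico _ _) fun i _ => isOpen_discrete {x i})
    (dense_biUnion_pi_singleton x fun _ hF => (he.eventually_disjoint_Ico hF).frequently)

theorem stmt12 (x : ℕ → Bool) (e : ℕ → ℕ) (he : StrictMono e) (he0 : e 0 = 0) :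
    {y : ℕ → Bool | ∃ᶠ n in atTop, ∀ i ∈ Set.Ico (e n) (e (n+1)), y i = x i} ∈
      residual (ℕ → Bool) :=
  stmt12_general x e he
end

section
/- A statistically splitting element splits: if S is moderate (0 < lower density of S and upper density of S < 1) and lim_{n→∞} d_n(S ∩ X)/(d_n(S)·d_n(X)) = 1 for an infinite X ⊆ ω, then both S ∩ X and X \ S are infinite. -/
/-! Dividing the relative density `|S ∩ X ∩ n| / |X ∩ n|` of `S` inside `X` by the ratio in the
hypothesis gives back `d_n(S)`. Since `|X ∩ n| → ∞`, the relative density tends to `0` if `S ∩ X`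
is finite and to `1` if `X \ S` is finite; then `d_n(S)` tends to `0` or `1`, contradicting
moderateness. -/

open Filter Topology

namespace Nat

variable {p q : ℕ → Prop} [DecidablePred p] [DecidablePred q]

lemma card_setOf_and_lt (n : ℕ) :
    Nat.card {k | p k ∧ k < n} = count p n := by
  rw [count_eq_card_filter_range, ← Nat.card_eq_finsetCard]
  congr! 2
  ext k
  simp [and_comm]

lemma tendsto_count_atTop (hp : {k | p k}.Infinite) : Tendsto (count p) atTop atTop :=
  tendsto_atTop_atTop_of_monotone (count_monotone p) fun m =>
    ⟨nth p m, (count_nth_of_infinite hp m).ge⟩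

lemma count_and_add_count_not_and (n : ℕ) :
    count (fun k => p k ∧ q k) n + count (fun k => ¬p k ∧ q k) n = count q n := by
  simp only [count_eq_card_filter_range]
  rw [← Finset.card_filter_add_card_filter_not (s := {k ∈ Finset.range n | q k}) p,
    Finset.filter_filter, Finset.filter_filter]
  simp only [and_comm]

lemma tendsto_count_and_div_count_of_finite (hpq : {k | p k ∧ q k}.Finite)
    (hq : {k | q k}.Infinite) :
    Tendsto (fun n => (count (fun k => p k ∧ q k) n : ℝ) / count q n) atTop (𝓝 0) := by
  have hbound (n : ℕ) : (count (fun k => p k ∧ q k) n : ℝ) ≤ hpq.toFinset.card := by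
    exact_mod_cast count_le_card hpq n
  refine squeeze_zero (fun n => by positivity)
    (fun n => div_le_div_of_nonneg_right (hbound n) (Nat.cast_nonneg _)) ?_
  exact tendsto_const_nhds.div_atTop (tendsto_natCast_atTop_atTop.comp (tendsto_count_atTop hq))

lemma tendsto_count_and_div_count_of_finite_not_and (hpq : {k | ¬p k ∧ q k}.Finite)
    (hq : {k | q k}.Infinite) :
    Tendsto (fun n => (count (fun k => p k ∧ q k) n : ℝ) / count q n) atTop (𝓝 1) := by
  have h := (tendsto_count_and_div_count_of_finite hpq hq).const_sub 1
  rw [sub_zero] at h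
  refine h.congr' ?_
  filter_upwards [(tendsto_count_atTop hq).eventually_ne_atTop 0] with n hn
  rw [sub_eq_iff_eq_add, ← add_div, ← cast_add, count_and_add_count_not_and,
    div_self (cast_ne_zero.mpr hn)]

end Nat

lemma tendsto_of_div_mul_tendsto_one {α : Type*} {l : Filter α} {u v w : α → ℝ} {L : ℝ}
    (h : Tendsto (fun n => u n / (v n * w n)) l (𝓝 1))
    (hL : Tendsto (fun n => u n / w n) l (𝓝 L)) : Tendsto v l (𝓝 L) := by
  have hquot := hL.div h one_ne_zero
  rw [div_one] at hquot
  refine hquot.congr' ?_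
  filter_upwards [h.eventually_ne one_ne_zero] with n hn
  obtain ⟨hu, hvw⟩ := div_ne_zero_iff.mp hn
  obtain ⟨hv, hw⟩ := mul_ne_zero_iff.mp hvw
  simp only [Pi.div_apply]
  field_simp

theorem stmt13 (S X : Set ℕ) (hX : X.Infinite)
    (hmod₁ : 0 < atTop.liminf (fun n => (Nat.card {k | k ∈ S ∧ k < n} : ℝ) / n))
    (hmod₂ : atTop.limsup (fun n => (Nat.card {k | k ∈ S ∧ k < n} : ℝ) / n) < 1)
    (h : Tendsto (fun n =>
      ((Nat.card {k | k ∈ S ∩ X ∧ k < n} : ℝ) / n) /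
        (((Nat.card {k | k ∈ S ∧ k < n} : ℝ) / n) *
          ((Nat.card {k | k ∈ X ∧ k < n} : ℝ) / n))) atTop (𝓝 1)) :
    (S ∩ X).Infinite ∧ (X \ S).Infinite := by
  classical
  simp only [Set.mem_inter_iff, Nat.card_setOf_and_lt] at hmod₁ hmod₂ h
  have density_tendsto {L : ℝ}
      (hL : Tendsto (fun n => (Nat.count (fun k => k ∈ S ∧ k ∈ X) n : ℝ) / Nat.count (· ∈ X) n)
        atTop (𝓝 L)) :
      Tendsto (fun n => (Nat.count (· ∈ S) n : ℝ) / n) atTop (𝓝 L) := by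
    refine tendsto_of_div_mul_tendsto_one h (hL.congr' ?_)
    filter_upwards [eventually_ne_atTop 0] with n hn
    exact (div_div_div_cancel_right₀ (Nat.cast_ne_zero.mpr hn) _ _).symm
  refine ⟨fun hfin => ?_, fun hfin => ?_⟩
  · have hlim := density_tendsto (Nat.tendsto_count_and_div_count_of_finite hfin hX)
    exact hmod₁.ne' hlim.liminf_eq
  · have hlim := density_tendsto (Nat.tendsto_count_and_div_count_of_finite_not_and
      (hfin.subset fun k hk => ⟨hk.2, hk.1⟩) hX)
    exact hmod₂.ne hlim.limsup_eq
end
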